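/- arXiv:gr-qc/0406111 — 8 statements merged into one kernel-verified Lean document; each statement's English description precedes it below -/
import Mathlib

section
/- Let η be an invertible symmetric 4×4 real matrix (a flat metric in matrix form), and let l, p ∈ ℝ⁴ be column vectors of covector components satisfying lᵀη⁻¹l = 0 (l is null), pᵀη⁻¹p = 1 (p is unit), and lᵀη⁻¹p = 0 (l and p are orthogonal). Define the 2-form F := l pᵀ − p lᵀ. Then the Kerr–Schild metric g := η + l lᵀ satisfies g = η − F η⁻¹ F; that is, the deformation law g = λ η + μ F η⁻¹ F holds with λ = 1 and μ = −1. -/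
open Matrix

lemma vmv_mul_mul (a b c d : Fin 4 → ℝ) (M : Matrix (Fin 4) (Fin 4) ℝ) :
    vecMulVec a b * M * vecMulVec c d = (b ⬝ᵥ (M *ᵥ c)) • vecMulVec a d := by
  ext i j
  simp only [mul_apply, Matrix.smul_apply, vecMulVec_apply, mulVec, dotProduct,
    smul_eq_mul, Finset.mul_sum, Finset.sum_mul]
  rw [Finset.sum_comm]
  exact Finset.sum_congr rfl fun k _ => Finset.sum_congr rfl fun m _ => by ring

/-- Kerr–Schild metrics satisfy the deformation law `g = η − F η⁻¹ F` with
`F = l pᵀ − p lᵀ`, for `l` null, `p` unit and `l ⊥ p` with respect to `η`. -/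
theorem kerr_schild_deformation
    (η : Matrix (Fin 4) (Fin 4) ℝ) (hη : η.IsSymm) (hηinv : IsUnit η.det)
    (l p : Fin 4 → ℝ)
    (hl : l ⬝ᵥ (η⁻¹ *ᵥ l) = 0)
    (hp : p ⬝ᵥ (η⁻¹ *ᵥ p) = 1)
    (hlp : l ⬝ᵥ (η⁻¹ *ᵥ p) = 0) :
    η + vecMulVec l l =
      η - (vecMulVec l p - vecMulVec p l) * η⁻¹ * (vecMulVec l p - vecMulVec p l) := by
  have hsymm : (η⁻¹).IsSymm := by
    unfold Matrix.IsSymm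
    rw [transpose_nonsing_inv, hη]
  have hpl : p ⬝ᵥ (η⁻¹ *ᵥ l) = 0 := by
    rw [dotProduct_mulVec, ← hsymm, vecMul_transpose, dotProduct_comm]
    exact hlp
  simp only [sub_mul, mul_sub, vmv_mul_mul, hl, hp, hlp, hpl]
  simp only [one_smul, zero_smul, sub_zero, zero_sub, sub_neg_eq_add]
end

section
/- Let g be an invertible symmetric n×n real matrix and F a skew-symmetric n×n real matrix. Then the characteristic polynomial χ of the matrix 𝔽 := g⁻¹F satisfies χ(−X) = (−1)ⁿ χ(X); equivalently, the coefficient of X^k in χ vanishes whenever n − k is odd, so χ only involves powers X^r with n − r even. -/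
open Matrix Polynomial

section aux

variable {n : Type*} [DecidableEq n] [Fintype n]

lemma my_charmatrix_transpose (M : Matrix n n ℝ) :
    charmatrix Mᵀ = (charmatrix M)ᵀ := by
  refine Matrix.ext fun i j => ?_
  rw [transpose_apply]
  by_cases h : i = j
  · subst h; simp
  · rw [charmatrix_apply_ne _ _ _ h, charmatrix_apply_ne _ _ _ (Ne.symm h), transpose_apply]

lemma my_charpoly_transpose (M : Matrix n n ℝ) :
    Mᵀ.charpoly = M.charpoly := by
  rw [Matrix.charpoly, Matrix.charpoly, my_charmatrix_transpose, det_transpose]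

lemma my_charpoly_conj (P M : Matrix n n ℝ) (hP : IsUnit P.det) :
    (P * M * P⁻¹).charpoly = M.charpoly := by
  have hmap : IsUnit (((C : ℝ →+* ℝ[X]).mapMatrix P).det) := by
    rw [← RingHom.map_det]
    exact hP.map _
  have key : charmatrix (P * M * P⁻¹) * (C : ℝ →+* ℝ[X]).mapMatrix P
      = (C : ℝ →+* ℝ[X]).mapMatrix P * charmatrix M := by
    rw [charmatrix, charmatrix, sub_mul, mul_sub]
    congr 1
    · exact (scalar_commute (X : ℝ[X]) (fun r' => Commute.all _ _)
        ((C : ℝ →+* ℝ[X]).mapMatrix P)).eq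
    · rw [← RingHom.map_mul, ← RingHom.map_mul]
      congr 1
      rw [Matrix.mul_assoc, Matrix.nonsing_inv_mul _ hP, Matrix.mul_one]
  have hdet := congrArg Matrix.det key
  rw [det_mul, det_mul, mul_comm] at hdet
  exact hmap.mul_left_cancel hdet

lemma my_charpoly_comp_neg_X (M : Matrix n n ℝ) :
    M.charpoly.comp (-X) = (-1 : ℝ[X]) ^ (Fintype.card n) * (-M).charpoly := by
  rw [Matrix.charpoly, comp_eq_aeval, AlgHom.map_det (aeval (-X : ℝ[X]))]
  have key : (aeval (-X : ℝ[X])).mapMatrix (charmatrix M) = -(charmatrix (-M)) := by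
    refine Matrix.ext fun i j => ?_
    by_cases h : i = j
    · subst h
      simp only [AlgHom.mapMatrix_apply, Matrix.map_apply, charmatrix_apply_eq,
        Matrix.neg_apply, map_sub, aeval_X, aeval_C]
      simp
      ring
    · rw [AlgHom.mapMatrix_apply, Matrix.map_apply, charmatrix_apply_ne _ _ _ h,
        Matrix.neg_apply, charmatrix_apply_ne _ _ _ h]
      simp
  rw [key, det_neg]
  rfl

lemma my_coeff_comp_neg_X (p : ℝ[X]) (k : ℕ) :
    (p.comp (-X)).coeff k = (-1 : ℝ) ^ k * p.coeff k := by
  induction p using Polynomial.induction_on' with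
  | add p q hp hq => simp [add_comp, hp, hq, mul_add]
  | monomial i a =>
    rw [monomial_comp]
    have h0 : C a * (-X : ℝ[X]) ^ i = (-1 : ℝ[X]) ^ i * (C a * X ^ i) := by
      rw [neg_pow]; ring
    have h1 : ((-1 : ℝ[X])) ^ i = C ((-1 : ℝ) ^ i) := by simp
    rw [h0, h1, coeff_C_mul, coeff_C_mul, coeff_X_pow, coeff_monomial]
    by_cases h : i = k
    · simp [h]
    · simp [h, Ne.symm h]

end aux

/-- The characteristic polynomial `χ` of `𝔽 = g⁻¹ F`, with `g` symmetric invertible and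
`F` skew-symmetric, satisfies `χ(−X) = (−1)ⁿ χ(X)`; equivalently, the coefficient of `X^k`
vanishes whenever `n − k` is odd, i.e. `χ` only involves powers `X^r` with `n − r` even. -/
theorem charpoly_even_odd
    (n : ℕ) (g F : Matrix (Fin n) (Fin n) ℝ)
    (hg : g.IsSymm) (hginv : IsUnit g.det) (hF : Fᵀ = -F) :
    (Matrix.charpoly (g⁻¹ * F)).comp (-Polynomial.X)
        = (-1 : Polynomial ℝ) ^ n * Matrix.charpoly (g⁻¹ * F)
      ∧ ∀ k : ℕ, Odd (n - k) → (Matrix.charpoly (g⁻¹ * F)).coeff k = 0 := by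
  set A := g⁻¹ * F with hA
  have hginv' : IsUnit g⁻¹.det := isUnit_nonsing_inv_det g hginv
  have hAt : Aᵀ = -F * g⁻¹ := by
    rw [hA, transpose_mul, hF, Matrix.transpose_nonsing_inv, hg.eq]
  have hconj : g⁻¹ * Aᵀ * (g⁻¹)⁻¹ = -A := by
    rw [hAt, Matrix.nonsing_inv_nonsing_inv _ hginv]
    rw [hA, Matrix.mul_assoc, Matrix.mul_assoc, Matrix.nonsing_inv_mul _ hginv,
      Matrix.mul_one, Matrix.mul_neg]
  have hcp : (-A).charpoly = A.charpoly := by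
    rw [← hconj, my_charpoly_conj _ _ hginv', my_charpoly_transpose]
  have hmain : A.charpoly.comp (-X) = (-1 : ℝ[X]) ^ n * A.charpoly := by
    rw [my_charpoly_comp_neg_X, hcp, Fintype.card_fin]
  refine ⟨hmain, fun k hk => ?_⟩
  have hkn : k < n := by rcases hk with ⟨m, hm⟩; omega
  have hcoeff := congrArg (fun p => p.coeff k) hmain
  rw [my_coeff_comp_neg_X] at hcoeff
  have hpow : ((-1 : ℝ[X]) ^ n * A.charpoly).coeff k = (-1 : ℝ) ^ n * A.charpoly.coeff k := by
    rw [← C_1, ← C_neg, ← C_pow, coeff_C_mul]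
  rw [hpow] at hcoeff
  have hne : (-1 : ℝ) ^ n = -(-1 : ℝ) ^ k := by
    have hnk : n = k + (n - k) := by omega
    calc (-1 : ℝ) ^ n = (-1 : ℝ) ^ (k + (n - k)) := by rw [← hnk]
    _ = (-1 : ℝ) ^ k * (-1 : ℝ) ^ (n - k) := pow_add _ _ _
    _ = -(-1 : ℝ) ^ k := by rw [Odd.neg_one_pow hk]; ring
  rw [hne] at hcoeff
  have h2 : ((-1 : ℝ) ^ k) * A.charpoly.coeff k = 0 := by linarith
  rcases mul_eq_zero.mp h2 with h | h
  · exact absurd h (pow_ne_zero _ (by norm_num))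
  · exact h
end

section
/- Let g be an invertible symmetric n×n real matrix, F a skew-symmetric n×n real matrix, and set M := (g⁻¹F)². Then the minimal polynomial of M has degree at most ⌊(n+1)/2⌋. -/
set_option maxRecDepth 8000
set_option maxHeartbeats 1000000

open Matrix Polynomial

lemma coeff_comp_negX (p : ℝ[X]) (i : ℕ) : (p.comp (-X)).coeff i = (-1)^i * p.coeff i := by
  induction p using Polynomial.induction_on' with
  | add p q hp hq => simp [add_comp, hp, hq, mul_add]
  | monomial k a =>
    rw [monomial_comp, neg_pow, show ((-1:ℝ[X])^k) = C ((-1)^k) by simp,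
      ← mul_assoc, ← C_mul, coeff_C_mul, coeff_X_pow, coeff_monomial]
    by_cases h : i = k
    · subst h; simp [mul_comm]
    · simp [h, Ne.symm h]

/-- For `g` symmetric invertible and `F` skew-symmetric, the minimal polynomial of
`M = (g⁻¹F)²` has degree at most `⌊(n+1)/2⌋`. -/
theorem minpoly_degree_le
    (n : ℕ) (g F : Matrix (Fin n) (Fin n) ℝ)
    (hg : g.IsSymm) (hginv : IsUnit g.det) (hF : Fᵀ = -F) :
    (minpoly ℝ ((g⁻¹ * F) ^ 2)).natDegree ≤ (n + 1) / 2 := by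
  classical
  set A : Matrix (Fin n) (Fin n) ℝ := g⁻¹ * F with hA
  set p : ℝ[X] := A.charpoly with hpdef
  have hgg : g * g⁻¹ = 1 := mul_nonsing_inv g hginv
  -- the auxiliary determinant
  have key : ∀ i, (n + i) % 2 = 1 → p.coeff i = 0 := by
    intro i hi
    set B : Matrix (Fin n) (Fin n) ℝ[X] := (X : ℝ[X]) • g.map C - F.map C with hB
    set D : ℝ[X] := B.det with hDdef
    have hfac : B = g.map C * charmatrix A := by
      rw [hB, charmatrix, mul_sub]
      congr 1
      · ext i j
        rw [Matrix.scalar_apply, Matrix.mul_diagonal, Matrix.smul_apply, smul_eq_mul, mul_comm]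
      · have hgA : g * A = F := by rw [hA, ← mul_assoc, hgg, one_mul]
        rw [RingHom.mapMatrix_apply, ← hgA, Matrix.map_mul]
    have hgdet : (g.map (C : ℝ →+* ℝ[X])).det = C g.det := by
      rw [← RingHom.mapMatrix_apply, ← RingHom.map_det]
    have hD : D = C g.det * p := by
      rw [hDdef, hfac, det_mul, hpdef, Matrix.charpoly, hgdet]
    -- parity of D
    have hmap : B.map (Polynomial.aeval (-X : ℝ[X])) = -((X : ℝ[X]) • g.map C + F.map C) := by
      refine Matrix.ext fun a b => ?_
      simp only [hB, Matrix.map_apply, Matrix.sub_apply, Matrix.smul_apply, Matrix.neg_apply,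
        Matrix.add_apply, smul_eq_mul, map_sub, _root_.map_mul, aeval_X, aeval_C]
      simp only [algebraMap_eq]
      ring
    have h1 : D.comp (-X) = (B.map (Polynomial.aeval (-X : ℝ[X]))).det := by
      rw [comp_eq_aeval, hDdef, AlgHom.map_det]
      rfl
    have hgab : ∀ a b, g b a = g a b := fun a b => by
      rw [← Matrix.transpose_apply g a b, hg.eq]
    have hFab : ∀ a b, F b a = -F a b := fun a b => by
      rw [← Matrix.transpose_apply F a b, hF, Matrix.neg_apply]
    have h2 : Bᵀ = (X : ℝ[X]) • g.map C + F.map C := by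
      refine Matrix.ext fun a b => ?_
      simp only [hB, Matrix.transpose_apply, Matrix.sub_apply, Matrix.smul_apply,
        Matrix.add_apply, Matrix.map_apply, smul_eq_mul]
      rw [hgab, hFab]
      simp
    have hcompD : D.comp (-X) = (-1)^n * D := by
      rw [h1, hmap, det_neg, ← h2, det_transpose, ← hDdef]
      simp
    -- coefficient vanishing for D
    have hDc : D.coeff i = 0 := by
      have hthis := coeff_comp_negX D i
      rw [hcompD, show ((-1 : ℝ[X])^n) = C ((-1)^n) by simp, coeff_C_mul] at hthis
      have e1 : (-1:ℝ)^n * (-1)^i = -1 := by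
        rw [← pow_add]; exact Odd.neg_one_pow (Nat.odd_iff.mpr hi)
      have e2 : (-1:ℝ)^n * (-1)^n = 1 := by
        rw [← pow_add]; exact Even.neg_one_pow ⟨n, rfl⟩
      have h5 := congrArg ((-1:ℝ)^n * ·) hthis
      rw [← mul_assoc, ← mul_assoc, e1, e2, one_mul] at h5
      linarith
    have hgne : g.det ≠ 0 := hginv.ne_zero
    have := hD ▸ hDc
    rw [coeff_C_mul] at this
    exact (mul_eq_zero.mp this).resolve_left hgne
  -- now extract the even part
  have hcard : p.natDegree = n := by
    rw [hpdef, Matrix.charpoly_natDegree_eq_dim, Fintype.card_fin]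
  set ε := n % 2 with hε
  set k := n / 2 with hk
  set q : ℝ[X] := ∑ j ∈ Finset.range (k+1), C (p.coeff (2*j + ε)) * X^j with hq
  have hqc : ∀ m, q.coeff m = if m ∈ Finset.range (k+1) then p.coeff (2*m+ε) else 0 := by
    intro m
    rw [hq, finset_sum_coeff]
    simp only [coeff_C_mul, coeff_X_pow, mul_ite, mul_one, mul_zero]
    exact Finset.sum_ite_eq (Finset.range (k+1)) m (fun j => p.coeff (2*j+ε))
  have haevalq : A ^ ε * Polynomial.aeval (A^2) q = Polynomial.aeval A p := by
    rw [Polynomial.aeval_eq_sum_range' (n := n+1) (by rw [hcard]; omega) A, hq, map_sum,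
      Finset.mul_sum]
    have hterm : ∀ j, Polynomial.aeval (A^2) (C (p.coeff (2*j+ε)) * X^j)
        = p.coeff (2*j+ε) • A^(2*j) := by
      intro j
      rw [_root_.map_mul, aeval_C, aeval_X_pow, ← pow_mul, Algebra.smul_def]
    have lhs_eq : ∀ j, A^ε * Polynomial.aeval (A^2) (C (p.coeff (2*j+ε)) * X^j)
        = p.coeff (2*j+ε) • A^(2*j+ε) := by
      intro j
      rw [hterm j, mul_smul_comm, ← pow_add]
      congr 2
      omega
    rw [Finset.sum_congr rfl fun j _ => lhs_eq j]
    have himg : (Finset.range (k+1)).image (fun j => 2*j + ε) ⊆ Finset.range (n+1) := by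
      intro i hi
      simp only [Finset.mem_image, Finset.mem_range] at hi ⊢
      obtain ⟨j, hj, rfl⟩ := hi
      omega
    have hinj : ∀ x ∈ Finset.range (k+1), ∀ y ∈ Finset.range (k+1),
        2*x + ε = 2*y + ε → x = y := fun x _ y _ h => by omega
    have hvanish : ∀ i ∈ Finset.range (n+1),
        i ∉ (Finset.range (k+1)).image (fun j => 2*j + ε) → p.coeff i • A^i = 0 := by
      intro i hi hni
      have hin : i < n + 1 := Finset.mem_range.mp hi
      have : (n + i) % 2 = 1 := by
        by_contra hpar
        exact hni (Finset.mem_image.mpr ⟨i/2, Finset.mem_range.mpr (by omega), by omega⟩)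
      rw [key i this, zero_smul]
    calc (∑ j ∈ Finset.range (k+1), p.coeff (2*j+ε) • A^(2*j+ε))
        = ∑ i ∈ (Finset.range (k+1)).image (fun j => 2*j+ε), p.coeff i • A^i :=
          (Finset.sum_image (f := fun i => p.coeff i • A^i) hinj).symm
      _ = ∑ i ∈ Finset.range (n+1), p.coeff i • A^i := Finset.sum_subset himg hvanish
  have hann : Polynomial.aeval (A^2) (X^ε * q) = 0 := by
    rw [_root_.map_mul, aeval_X_pow, ← pow_mul]
    have h2e : (A^(2*ε)) = A^ε * A^ε := by rw [← pow_add]; congr 1; omega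
    rw [h2e, mul_assoc, haevalq, hpdef, Matrix.aeval_self_charpoly, mul_zero]
  have hcoeff_top : (X^ε * q).coeff (ε + k) = 1 := by
    rw [mul_comm, add_comm, coeff_mul_X_pow, hqc k,
      if_pos (Finset.mem_range.mpr (Nat.lt_succ_self k))]
    have h2k : 2*k+ε = n := by omega
    rw [h2k, ← hcard]
    exact (Matrix.charpoly_monic A).coeff_natDegree
  have hne : X^ε * q ≠ 0 := fun h => by simp [h] at hcoeff_top
  have hdeg : (X^ε * q).natDegree ≤ ε + k := by
    refine (Polynomial.natDegree_mul_le).trans ?_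
    rw [Polynomial.natDegree_X_pow]
    have hqd : q.natDegree ≤ k := by
      rw [hq]
      refine Polynomial.natDegree_sum_le_of_forall_le _ _ fun j hj => ?_
      refine (Polynomial.natDegree_C_mul_le _ _).trans ?_
      rw [Polynomial.natDegree_X_pow]
      exact Nat.lt_succ_iff.mp (Finset.mem_range.mp hj)
    omega
  have hdvd := minpoly.dvd ℝ (A^2) hann
  have hfin := Polynomial.natDegree_le_of_dvd hdvd hne
  exact hfin.trans (hdeg.trans (by omega))
end

section
/- Let F be a 4×4 real matrix whose characteristic polynomial is X⁴ + I₁X² + I₂, let ε ∈ {1, −1} and a ∈ ℝ. Then det(a·1 − εF²) = (a² + εaI₁ + I₂)². In particular, the deformed metric matrix a·1 − εF² is invertible if and only if p(εa) := a² + εaI₁ + I₂ is nonzero. -/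
open Matrix Polynomial

lemma eval_charpoly' {n : ℕ} {K : Type*} [CommRing K] (M : Matrix (Fin n) (Fin n) K) (r : K) :
    M.charpoly.eval r = (r • (1 : Matrix (Fin n) (Fin n) K) - M).det := by
  rw [Matrix.charpoly, ← Polynomial.coe_evalRingHom, RingHom.map_det]
  congr 1
  ext i j
  by_cases h : i = j
  · subst h
    simp [charmatrix_apply_eq, Matrix.one_apply]
  · simp [charmatrix_apply_ne _ _ _ h, Matrix.one_apply, h]

/-- If a 4×4 matrix `F` has characteristic polynomial `X⁴ + I₁X² + I₂`, then
`det(a·1 − εF²) = (a² + εaI₁ + I₂)²`; in particular the deformed metric matrix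
`a·1 − εF²` is invertible iff `p(εa) = a² + εaI₁ + I₂` is nonzero. -/
theorem det_deformed_metric
    (F : Matrix (Fin 4) (Fin 4) ℝ) (I₁ I₂ ε a : ℝ) (hε : ε = 1 ∨ ε = -1)
    (hchar : Matrix.charpoly F
        = Polynomial.X ^ 4 + Polynomial.C I₁ * Polynomial.X ^ 2 + Polynomial.C I₂) :
    (a • (1 : Matrix (Fin 4) (Fin 4) ℝ) - ε • F ^ 2).det
        = (a ^ 2 + ε * a * I₁ + I₂) ^ 2
      ∧ (IsUnit (a • (1 : Matrix (Fin 4) (Fin 4) ℝ) - ε • F ^ 2)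
          ↔ a ^ 2 + ε * a * I₁ + I₂ ≠ 0) := by
  have hε2 : ε ^ 2 = 1 := by rcases hε with h | h <;> simp [h]
  set b : ℝ := ε * a with hb
  have hεb : ε * b = a := by
    rw [hb, ← mul_assoc, ← sq, hε2, one_mul]
  -- rewrite the matrix as ε • (b • 1 - F²)
  have h1 : a • (1 : Matrix (Fin 4) (Fin 4) ℝ) - ε • F ^ 2
      = ε • (b • (1 : Matrix (Fin 4) (Fin 4) ℝ) - F ^ 2) := by
    rw [smul_sub, smul_smul, hεb]
  -- complexify
  set f : ℝ →+* ℂ := Complex.ofRealHom with hf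
  set G : Matrix (Fin 4) (Fin 4) ℂ := F.map f with hG
  have hmap : f.mapMatrix (b • (1 : Matrix (Fin 4) (Fin 4) ℝ) - F ^ 2)
      = (b : ℂ) • (1 : Matrix (Fin 4) (Fin 4) ℂ) - G ^ 2 := by
    ext i j
    simp [hG, hf, Matrix.smul_apply, Matrix.sub_apply, Matrix.one_apply, pow_two,
      Matrix.mul_apply, apply_ite, Matrix.map_apply]
  obtain ⟨s, hs⟩ := IsAlgClosed.exists_pow_nat_eq (b : ℂ) (n := 2) (by norm_num)
  -- factorization over ℂ
  have hfac : (b : ℂ) • (1 : Matrix (Fin 4) (Fin 4) ℂ) - G ^ 2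
      = -((s • (1 : Matrix (Fin 4) (Fin 4) ℂ) - G) * ((-s) • (1 : Matrix (Fin 4) (Fin 4) ℂ) - G)) := by
    have e : (s • (1 : Matrix (Fin 4) (Fin 4) ℂ) - G) * ((-s) • (1 : Matrix (Fin 4) (Fin 4) ℂ) - G)
        = G ^ 2 - (s ^ 2) • (1 : Matrix (Fin 4) (Fin 4) ℂ) := by
      simp only [Matrix.sub_mul, Matrix.mul_sub, Matrix.smul_mul, Matrix.mul_smul,
        Matrix.one_mul, Matrix.mul_one, smul_smul, smul_add, smul_sub, smul_neg, neg_smul,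
        one_smul, neg_neg, mul_neg, neg_mul, sub_neg_eq_add, sq]
      abel
    rw [e, neg_sub, hs]
  have hcharG : G.charpoly = X ^ 4 + C (I₁ : ℂ) * X ^ 2 + C (I₂ : ℂ) := by
    rw [hG, Matrix.charpoly_map, hchar]
    simp [Polynomial.map_add, Polynomial.map_mul, Polynomial.map_pow, hf,
      Complex.ofRealHom_eq_coe]
  have hev : ∀ t : ℂ, (t • (1 : Matrix (Fin 4) (Fin 4) ℂ) - G).det
      = t ^ 4 + (I₁ : ℂ) * t ^ 2 + (I₂ : ℂ) := by
    intro t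
    rw [← eval_charpoly', hcharG]
    simp
  have hdetC : ((b : ℂ) • (1 : Matrix (Fin 4) (Fin 4) ℂ) - G ^ 2).det
      = ((b : ℂ) ^ 2 + (I₁ : ℂ) * b + (I₂ : ℂ)) ^ 2 := by
    rw [hfac, ← neg_one_smul ℂ ((s • (1 : Matrix (Fin 4) (Fin 4) ℂ) - G) * _), Matrix.det_smul,
      Matrix.det_mul, hev s, hev (-s)]
    have h4 : s ^ 4 = (b : ℂ) ^ 2 := by rw [← hs]; ring
    have h2 : (-s) ^ 4 = (b : ℂ) ^ 2 := by rw [← hs]; ring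
    rw [h4]
    rw [show (-s) ^ 4 + (I₁ : ℂ) * (-s) ^ 2 + (I₂ : ℂ)
        = (b : ℂ) ^ 2 + (I₁ : ℂ) * b + (I₂ : ℂ) by rw [h2, show ((-s) : ℂ) ^ 2 = b by rw [← hs]; ring]]
    rw [show ((s : ℂ)) ^ 2 = b from hs]
    norm_num
    ring
  -- back to ℝ
  have hdetR : (b • (1 : Matrix (Fin 4) (Fin 4) ℝ) - F ^ 2).det
      = (b ^ 2 + I₁ * b + I₂) ^ 2 := by
    apply Complex.ofReal_injective
    calc ((b • (1 : Matrix (Fin 4) (Fin 4) ℝ) - F ^ 2).det : ℂ)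
        = (f.mapMatrix (b • (1 : Matrix (Fin 4) (Fin 4) ℝ) - F ^ 2)).det := f.map_det _
      _ = ((b : ℂ) • (1 : Matrix (Fin 4) (Fin 4) ℂ) - G ^ 2).det := by rw [hmap]
      _ = ((b : ℂ) ^ 2 + (I₁ : ℂ) * b + (I₂ : ℂ)) ^ 2 := hdetC
      _ = (((b ^ 2 + I₁ * b + I₂) ^ 2 : ℝ) : ℂ) := by push_cast; ring
  have hbsq : b ^ 2 = a ^ 2 := by rw [hb, mul_pow, hε2, one_mul]
  have key : (a • (1 : Matrix (Fin 4) (Fin 4) ℝ) - ε • F ^ 2).det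
      = (a ^ 2 + ε * a * I₁ + I₂) ^ 2 := by
    rw [h1, Matrix.det_smul, hdetR, Fintype.card_fin,
      show ε ^ 4 = 1 by rw [show (4 : ℕ) = 2 * 2 from rfl, pow_mul, hε2, one_pow], one_mul,
      hbsq, hb]
    ring
  refine ⟨key, ?_⟩
  rw [Matrix.isUnit_iff_isUnit_det, key, isUnit_iff_ne_zero]
  exact pow_ne_zero_iff two_ne_zero
end

section
/- Let F be a 4×4 real matrix satisfying F⁴ + I₁F² + I₂·1 = 0 for some reals I₁, I₂, let ε ∈ {1, −1}, a ∈ ℝ, p(x) := x² + I₁x + I₂, and assume p(εa) ≠ 0, so that Ḡ := a·1 − εF² is invertible. Then the deformed 2-form matrix F̄ := Ḡ⁻¹F satisfies F̄⁴ + Ī₁F̄² + Ī₂·1 = 0, where Ī₁ = (a²I₁ + 4εaI₂ + I₁I₂)/p(εa)² and Ī₂ = I₂/p(εa)². In other words, the invariant coefficients of the 2-form with respect to the deformed metric are these rational functions of a, I₁, I₂. -/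
open Matrix Polynomial

/-- The invariant coefficients of the 2-form with respect to the deformed metric:
if `F⁴ + I₁F² + I₂·1 = 0` and `p(εa) ≠ 0`, then `F̄ = (a·1 − εF²)⁻¹ F` satisfies
`F̄⁴ + Ī₁F̄² + Ī₂·1 = 0` with `Ī₁ = (a²I₁ + 4εaI₂ + I₁I₂)/p(εa)²` and `Ī₂ = I₂/p(εa)²`. -/
theorem invariants_of_deformed_two_form
    (F : Matrix (Fin 4) (Fin 4) ℝ) (I₁ I₂ ε a : ℝ) (hε : ε = 1 ∨ ε = -1)
    (hCH : F ^ 4 + I₁ • F ^ 2 + I₂ • (1 : Matrix (Fin 4) (Fin 4) ℝ) = 0)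
    (hp : (ε * a) ^ 2 + I₁ * (ε * a) + I₂ ≠ 0) :
    ((a • (1 : Matrix (Fin 4) (Fin 4) ℝ) - ε • F ^ 2)⁻¹ * F) ^ 4
        + ((a ^ 2 * I₁ + 4 * ε * a * I₂ + I₁ * I₂) / ((ε * a) ^ 2 + I₁ * (ε * a) + I₂) ^ 2)
            • ((a • (1 : Matrix (Fin 4) (Fin 4) ℝ) - ε • F ^ 2)⁻¹ * F) ^ 2
        + (I₂ / ((ε * a) ^ 2 + I₁ * (ε * a) + I₂) ^ 2) • (1 : Matrix (Fin 4) (Fin 4) ℝ)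
        = 0 := by
  have hε2 : ε ^ 2 = 1 := by rcases hε with h | h <;> rw [h] <;> norm_num
  set P : ℝ := (ε * a) ^ 2 + I₁ * (ε * a) + I₂ with hP
  set c₁ : ℝ := a ^ 2 * I₁ + 4 * ε * a * I₂ + I₁ * I₂ with hc₁
  -- abbreviations for polynomial constants
  set Ca : ℝ[X] := C a with hCa
  set Ce : ℝ[X] := C ε with hCe'
  set Cb : ℝ[X] := C I₁ with hCb
  set Cc : ℝ[X] := C I₂ with hCc
  have hCe : Ce ^ 2 = 1 := by rw [hCe', ← C_pow, hε2, C_1]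
  set ch : ℝ[X] := X ^ 4 + Cb * X ^ 2 + Cc with hch
  set n : ℝ[X] := C (a + ε * I₁) + Ce * X ^ 2 with hn
  set q0 : ℝ[X] := n ^ 4 * X ^ 4 + C c₁ * n ^ 2 * X ^ 2 + C (I₂ * P ^ 2) with hq0
  -- the cofactors
  set R : ℝ[X] := Ce^2*Cb*Cc*X^2 + Ce^2*Cb^2*Cc + Ce^4*X^8 + -1*Ce^4*Cc*X^4 + Ce^4*Cc^2
      + 3*Ce^4*Cb*X^6 + -2*Ce^4*Cb*Cc*X^2 + 3*Ce^4*Cb^2*X^4 + -1*Ce^4*Cb^2*Cc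
      + Ce^4*Cb^3*X^2 + 2*Ca*Ce*Cb*Cc + 4*Ca*Ce^3*X^6 + 8*Ca*Ce^3*Cb*X^4
      + 4*Ca*Ce^3*Cb^2*X^2 + 6*Ca^2*Ce^2*X^4 + 2*Ca^2*Ce^2*Cc + 7*Ca^2*Ce^2*Cb*X^2
      + Ca^2*Ce^2*Cb^2 + 4*Ca^3*Ce*X^2 + 2*Ca^3*Ce*Cb + Ca^4 with hR
  set S : ℝ[X] := -1*Cc^3 + -1*Ce^2*Cc^3 + Ce^2*Cb*Cc^2*X^2 + Ce^2*Cb^2*Cc^2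
      + -1*Ca^2*Cb*Cc*X^2 + 2*Ca^3*Ce*Cb*Cc + Ca^4*Cc + Ca^4*Ce^2*Cc with hS
  have h1 : C (a + ε * I₁) = Ca + Ce * Cb := by
    rw [hCa, hCe', hCb, _root_.map_add, _root_.map_mul]
  have h2 : C c₁ = Ca ^ 2 * Cb + 4 * Ca * Ce * Cc + Cb * Cc := by
    rw [hc₁, hCa, hCe', hCb, hCc]
    simp only [_root_.map_add, _root_.map_mul, _root_.map_pow, _root_.map_ofNat]
    ring
  have h3 : C (I₂ * P ^ 2) = Cc * ((Ce * Ca) ^ 2 + Cb * (Ce * Ca) + Cc) ^ 2 := by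
    rw [hP, hCa, hCe', hCb, hCc]
    simp only [_root_.map_add, _root_.map_mul, _root_.map_pow]
  have hq : q0 = ch * R := by
    rw [hq0, hn, h1, h2, h3, hch, hR]
    linear_combination (-1*Cc^3 + -1*Ce^2*Cc^3 + Ce^2*Cb*Cc^2*X^2 + Ce^2*Cb^2*Cc^2
      + -1*Ca^2*Cb*Cc*X^2 + 2*Ca^3*Ce*Cb*Cc + Ca^4*Cc + Ca^4*Ce^2*Cc) * hCe
  -- Cayley–Hamilton in polynomial form
  have hch0 : aeval F ch = 0 := by
    rw [hch, hCb, hCc]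
    simp only [_root_.map_add, _root_.map_mul, _root_.map_pow, aeval_X, aeval_C, Algebra.algebraMap_eq_smul_one,
      smul_mul_assoc, one_mul]
    simpa using hCH
  set N : Matrix (Fin 4) (Fin 4) ℝ := aeval F n with hN
  have hcommNF : Commute N F := by
    have : Commute n X := Commute.all n X
    simpa [hN] using this.map (aeval F)
  have H : N ^ 4 * F ^ 4 + c₁ • (N ^ 2 * F ^ 2) + (I₂ * P ^ 2) • (1 : Matrix (Fin 4) (Fin 4) ℝ)
      = 0 := by
    have := congrArg (aeval F) hq
    rw [_root_.map_mul, hch0, zero_mul] at this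
    rw [hq0] at this
    simp only [_root_.map_add, _root_.map_mul, _root_.map_pow, aeval_X, aeval_C,
      Algebra.algebraMap_eq_smul_one, smul_mul_assoc, one_mul, ← hN] at this
    rwa [_root_.smul_pow, one_pow, smul_smul] at this
  -- invertibility of the deformed metric
  have hGN : (a • (1 : Matrix (Fin 4) (Fin 4) ℝ) - ε • F ^ 2) * N = P • 1 := by
    have hCP : C P = (Ce * Ca) ^ 2 + Cb * (Ce * Ca) + Cc := by
      rw [hCa, hCe', hCb, hCc, hP]
      simp only [_root_.map_add, _root_.map_mul, _root_.map_pow]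
    have hg : (Ca - Ce * X ^ 2) * n = C P - ch := by
      rw [hn, h1, hch, hCP]
      linear_combination (-(Ca ^ 2 + Cb * X ^ 2 + X ^ 4)) * hCe
    have h4 : aeval F (Ca - Ce * X ^ 2) = a • (1 : Matrix (Fin 4) (Fin 4) ℝ) - ε • F ^ 2 := by
      rw [hCa, hCe']
      simp [Algebra.algebraMap_eq_smul_one, smul_mul_assoc]
    have h5 : aeval F (C P) = P • (1 : Matrix (Fin 4) (Fin 4) ℝ) := by
      simp [Algebra.algebraMap_eq_smul_one]
    calc (a • (1 : Matrix (Fin 4) (Fin 4) ℝ) - ε • F ^ 2) * N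
        = aeval F ((Ca - Ce * X ^ 2) * n) := by rw [_root_.map_mul, h4, hN]
      _ = aeval F (C P - ch) := by rw [hg]
      _ = P • 1 := by rw [_root_.map_sub, hch0, sub_zero, h5]
  have hGinv : (a • (1 : Matrix (Fin 4) (Fin 4) ℝ) - ε • F ^ 2)⁻¹ = P⁻¹ • N := by
    apply inv_eq_right_inv
    rw [mul_smul_comm, hGN, smul_smul, inv_mul_cancel₀ hp, one_smul]
  rw [hGinv, smul_mul_assoc, _root_.smul_pow, _root_.smul_pow, hcommNF.mul_pow, hcommNF.mul_pow]
  have H' : N ^ 4 * F ^ 4 = (-c₁) • (N ^ 2 * F ^ 2)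
      + (-(I₂ * P ^ 2)) • (1 : Matrix (Fin 4) (Fin 4) ℝ) := by
    linear_combination (norm := module) H
  rw [H']
  have hP2 : P ^ 2 ≠ 0 := pow_ne_zero _ hp
  match_scalars
  · field_simp
    ring
  · field_simp
    ring
end

section
/- Let F be a 4×4 real matrix satisfying F⁴ + I₁F² + I₂·1 = 0 for some reals I₁, I₂, let ε ∈ {1, −1}, a ∈ ℝ, p(x) := x² + I₁x + I₂, and set Ḡ := a·1 − εF². If a² ≠ I₂, then with λ := a/(a² − I₂) and μ := ε·p(εa)/(a² − I₂) one has Ḡ = λ·Ḡ² + μ·F². Consequently, if in addition p(εa) ≠ 0 (so Ḡ is invertible), then 1 = λ·Ḡ + μ·F²·Ḡ⁻¹; i.e., the original metric is recovered from the constant-curvature deformed metric ḡ = a g − εF₀g⁻¹F₀ by g = λ ḡ + μ F̄², where F̄² is the square of the 2-form taken with the deformed metric, and λ, μ are scalar functions of a and the invariants I₁, I₂ of the 2-form only. -/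
open Matrix

/-- Recovering the original metric from the deformed one: if `F⁴ + I₁F² + I₂·1 = 0`,
`Ḡ = a·1 − εF²` and `a² ≠ I₂`, then with `λ = a/(a² − I₂)` and
`μ = ε·p(εa)/(a² − I₂)` one has `Ḡ = λ·Ḡ² + μ·F²`; consequently, if moreover
`p(εa) ≠ 0`, then `1 = λ·Ḡ + μ·F²·Ḡ⁻¹`. -/
theorem original_metric_from_deformed
    (F : Matrix (Fin 4) (Fin 4) ℝ) (I₁ I₂ ε a : ℝ) (hε : ε = 1 ∨ ε = -1)
    (hCH : F ^ 4 + I₁ • F ^ 2 + I₂ • (1 : Matrix (Fin 4) (Fin 4) ℝ) = 0)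
    (ha : a ^ 2 ≠ I₂) :
    (a • (1 : Matrix (Fin 4) (Fin 4) ℝ) - ε • F ^ 2)
        = (a / (a ^ 2 - I₂)) • (a • (1 : Matrix (Fin 4) (Fin 4) ℝ) - ε • F ^ 2) ^ 2
          + (ε * ((ε * a) ^ 2 + I₁ * (ε * a) + I₂) / (a ^ 2 - I₂)) • F ^ 2
      ∧ ((ε * a) ^ 2 + I₁ * (ε * a) + I₂ ≠ 0 →
          (1 : Matrix (Fin 4) (Fin 4) ℝ)
            = (a / (a ^ 2 - I₂)) • (a • (1 : Matrix (Fin 4) (Fin 4) ℝ) - ε • F ^ 2)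
              + (ε * ((ε * a) ^ 2 + I₁ * (ε * a) + I₂) / (a ^ 2 - I₂))
                  • (F ^ 2 * (a • (1 : Matrix (Fin 4) (Fin 4) ℝ) - ε • F ^ 2)⁻¹)) := by
  set G : Matrix (Fin 4) (Fin 4) ℝ := a • (1 : Matrix (Fin 4) (Fin 4) ℝ) - ε • F ^ 2 with hG
  have hε2 : ε * ε = 1 := by rcases hε with h | h <;> subst h <;> norm_num
  have hd : a ^ 2 - I₂ ≠ 0 := sub_ne_zero.mpr ha
  have h4 : F ^ 4 = (-I₁) • F ^ 2 + (-I₂) • (1 : Matrix (Fin 4) (Fin 4) ℝ) := by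
    linear_combination (norm := module) hCH
  have hKK : (ε • F ^ 2) * (ε • F ^ 2)
      = (-I₁) • F ^ 2 + (-I₂) • (1 : Matrix (Fin 4) (Fin 4) ℝ) := by
    rw [Matrix.smul_mul, Matrix.mul_smul, smul_smul, hε2, one_smul, ← pow_add]
    exact h4
  set p : ℝ := (ε * a) ^ 2 + I₁ * (ε * a) + I₂ with hp
  have hG2 : G ^ 2 = (a ^ 2 - I₂) • (1 : Matrix (Fin 4) (Fin 4) ℝ)
      - (2 * a * ε + I₁) • F ^ 2 := by
    rw [sq, hG, sub_mul, mul_sub, mul_sub, hKK]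
    simp only [Matrix.smul_mul, Matrix.mul_smul, one_mul, mul_one, smul_smul]
    module
  have hQ : G * G = (2 * a + ε * I₁) • G - p • (1 : Matrix (Fin 4) (Fin 4) ℝ) := by
    rw [← sq, hG2, hG, smul_sub, smul_smul, smul_smul]
    rw [show (2 * a + ε * I₁) * ε = 2 * a * ε + I₁ by linear_combination I₁ * hε2]
    rw [show (2 * a + ε * I₁) * a = (a ^ 2 - I₂) + p by
      rw [hp]; linear_combination (-(a ^ 2)) * hε2]
    module
  have heq : ε * p = a * (2 * a * ε + I₁) - ε * (a ^ 2 - I₂) := by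
    rw [hp]; linear_combination (ε * a ^ 2 + a * I₁) * hε2
  have part1 : G = (a / (a ^ 2 - I₂)) • G ^ 2 + (ε * p / (a ^ 2 - I₂)) • F ^ 2 := by
    rw [hG2]
    have hμ : ε * p / (a ^ 2 - I₂) =
        (a / (a ^ 2 - I₂)) * (2 * a * ε + I₁) - ε := by
      rw [heq]; field_simp
    rw [hμ, hG]
    have hcoef : a / (a ^ 2 - I₂) * (a ^ 2 - I₂) = a := by field_simp
    simp only [smul_sub, smul_smul, hcoef]
    module
  refine ⟨part1, fun hpne => ?_⟩
  set B : Matrix (Fin 4) (Fin 4) ℝ :=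
    p⁻¹ • ((2 * a + ε * I₁) • (1 : Matrix (Fin 4) (Fin 4) ℝ) - G) with hB
  have hGB : G * B = 1 := by
    rw [hB, Matrix.mul_smul, mul_sub, Matrix.mul_smul, mul_one, hQ, sub_sub_cancel,
      smul_smul, inv_mul_cancel₀ hpne, one_smul]
  have hinv : G⁻¹ = B := Matrix.inv_eq_right_inv hGB
  rw [hinv]
  calc (1 : Matrix (Fin 4) (Fin 4) ℝ) = G * B := hGB.symm
    _ = ((a / (a ^ 2 - I₂)) • G ^ 2 + (ε * p / (a ^ 2 - I₂)) • F ^ 2) * B := by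
        rw [← part1]
    _ = (a / (a ^ 2 - I₂)) • (G ^ 2 * B) + (ε * p / (a ^ 2 - I₂)) • (F ^ 2 * B) := by
        rw [add_mul, Matrix.smul_mul, Matrix.smul_mul]
    _ = (a / (a ^ 2 - I₂)) • G + (ε * p / (a ^ 2 - I₂)) • (F ^ 2 * B) := by
        rw [show G ^ 2 * B = G * (G * B) by rw [sq, mul_assoc], hGB, mul_one]
end

section
/- Let V be a real vector space and E : V × V × V × V → ℝ a multilinear map. Let Π, Π̄ : V → V be linear maps with Π ∘ Π̄ = Π̄ and Π̄ ∘ Π = Π, and suppose there exist linear functionals θ, θ̄ on V and vectors n, n̄ ∈ V such that every x ∈ V decomposes as x = Πx + θ(x)·n and also as x = Π̄x + θ̄(x)·n̄. Then the following two sets of conditions are equivalent: (i) E(Πx, Πy, Πz, Πw) = 0 and E(Πx, Πy, Πz, n) = 0 for all x, y, z, w ∈ V; (ii) E(Π̄x, Π̄y, Π̄z, Π̄w) = 0 and E(Π̄x, Π̄y, Π̄z, n̄) = 0 for all x, y, z, w ∈ V. -/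
lemma subsidiary_aux
    (V : Type*) [AddCommGroup V] [Module ℝ V]
    (E : V →ₗ[ℝ] V →ₗ[ℝ] V →ₗ[ℝ] V →ₗ[ℝ] ℝ)
    (P Pb : V →ₗ[ℝ] V) (θ : V →ₗ[ℝ] ℝ) (n nb : V)
    (hcomp : P ∘ₗ Pb = Pb)
    (hdec : ∀ x : V, x = P x + θ x • n)
    (h1 : ∀ x y z w : V, E (P x) (P y) (P z) (P w) = 0)
    (h2 : ∀ x y z : V, E (P x) (P y) (P z) n = 0) :
    ((∀ x y z w : V, E (Pb x) (Pb y) (Pb z) (Pb w) = 0)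
      ∧ (∀ x y z : V, E (Pb x) (Pb y) (Pb z) nb = 0)) := by
  have e : ∀ v : V, Pb v = P (Pb v) := fun v => (LinearMap.congr_fun hcomp v).symm
  constructor
  · intro x y z w
    rw [e x, e y, e z, e w]
    exact h1 _ _ _ _
  · intro x y z
    rw [e x, e y, e z]
    have hnb := hdec nb
    calc E (P (Pb x)) (P (Pb y)) (P (Pb z)) nb
        = E (P (Pb x)) (P (Pb y)) (P (Pb z)) (P nb + θ nb • n) := by rw [← hnb]
      _ = E (P (Pb x)) (P (Pb y)) (P (Pb z)) (P nb)
            + θ nb • E (P (Pb x)) (P (Pb y)) (P (Pb z)) n := by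
          rw [map_add, map_smul]
      _ = 0 := by rw [h1, h2]; simp

/-- The subsidiary conditions on a curvature-type multilinear map `E`, formulated with the
projector `P` (= Π) and normal `n`, are equivalent to the same conditions formulated with
the projector `Pb` (= Π̄) and normal `nb` (= n̄), provided `Π ∘ Π̄ = Π̄`, `Π̄ ∘ Π = Π` and
every vector decomposes as `x = Πx + θ(x)n = Π̄x + θ̄(x)n̄`. -/
theorem subsidiary_conditions_equiv
    (V : Type*) [AddCommGroup V] [Module ℝ V]
    (E : V →ₗ[ℝ] V →ₗ[ℝ] V →ₗ[ℝ] V →ₗ[ℝ] ℝ)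
    (P Pb : V →ₗ[ℝ] V) (θ θb : V →ₗ[ℝ] ℝ) (n nb : V)
    (hcomp₁ : P ∘ₗ Pb = Pb) (hcomp₂ : Pb ∘ₗ P = P)
    (hdec : ∀ x : V, x = P x + θ x • n)
    (hdecb : ∀ x : V, x = Pb x + θb x • nb) :
    ((∀ x y z w : V, E (P x) (P y) (P z) (P w) = 0)
        ∧ (∀ x y z : V, E (P x) (P y) (P z) n = 0))
      ↔ ((∀ x y z w : V, E (Pb x) (Pb y) (Pb z) (Pb w) = 0)
        ∧ (∀ x y z : V, E (Pb x) (Pb y) (Pb z) nb = 0)) := by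
  constructor
  · intro ⟨h1, h2⟩
    exact subsidiary_aux V E P Pb θ n nb hcomp₁ hdec h1 h2
  · intro ⟨h1, h2⟩
    exact subsidiary_aux V E Pb P θb nb n hcomp₂ hdecb h1 h2
end

section
/- Let V be a real vector space, g a symmetric bilinear form on V, σ ∈ {1, −1}, and n ∈ V with g(n, n) = σ. Define the projector Π : V → V by Πx := x − σ·g(n, x)·n. Let E : V × V × V × V → ℝ be a multilinear map with the symmetries of a Riemann-type tensor: E(x,y,z,w) = −E(y,x,z,w), E(x,y,z,w) = −E(x,y,w,z), and E(x,y,z,w) = E(z,w,x,y) for all arguments. If E(Πx, Πy, Πz, Πw) = 0, E(Πx, Πy, Πz, n) = 0, and E(x, n, z, n) = 0 for all x, y, z, w ∈ V, then E = 0. -/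
/-- A 4-tensor with the algebraic symmetries of the Riemann tensor vanishes identically
if its fully tangential projection, its tangential projection with one normal slot, and
its double contraction with the unit normal all vanish (identity (12) of the paper). -/
theorem riemann_type_tensor_vanishes
    (V : Type*) [AddCommGroup V] [Module ℝ V]
    (g : V →ₗ[ℝ] V →ₗ[ℝ] ℝ) (hg : ∀ x y : V, g x y = g y x)
    (σ : ℝ) (hσ : σ = 1 ∨ σ = -1) (n : V) (hn : g n n = σ)
    (E : V →ₗ[ℝ] V →ₗ[ℝ] V →ₗ[ℝ] V →ₗ[ℝ] ℝ)
    (hanti₁ : ∀ x y z w : V, E x y z w = - E y x z w)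
    (hanti₂ : ∀ x y z w : V, E x y z w = - E x y w z)
    (hpair : ∀ x y z w : V, E x y z w = E z w x y)
    (htan : ∀ x y z w : V,
      E (x - σ • g n x • n) (y - σ • g n y • n) (z - σ • g n z • n) (w - σ • g n w • n) = 0)
    (hmix : ∀ x y z : V,
      E (x - σ • g n x • n) (y - σ • g n y • n) (z - σ • g n z • n) n = 0)
    (hnn : ∀ x z : V, E x n z n = 0) :
    ∀ x y z w : V, E x y z w = 0 := by
  -- E vanishes whenever the last two slots are both n
  have hlast2 : ∀ a b : V, E a b n n = 0 := by
    intro a b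
    have := hanti₂ a b n n
    linarith
  -- E vanishes with n in slots 1 and 4
  have h14 : ∀ b c : V, E n b c n = 0 := by
    intro b c
    have := hanti₁ n b c n
    rw [this, hnn]; ring
  -- E with n in the last slot vanishes
  have h4 : ∀ a b c : V, E a b c n = 0 := by
    intro a b c
    have h := hmix a b c
    simp only [map_sub, map_smul, LinearMap.sub_apply, LinearMap.smul_apply,
      smul_eq_mul, sub_eq_add_neg, ← neg_smul, map_add, LinearMap.add_apply, hnn, h14, hlast2] at h
    linarith
  have h3 : ∀ a b c : V, E a b n c = 0 := by
    intro a b c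
    have := hanti₂ a b c n
    rw [h4] at this; linarith
  have h1 : ∀ a b c : V, E n a b c = 0 := by
    intro a b c
    rw [hpair, h3]
  have h2 : ∀ a b c : V, E a n b c = 0 := by
    intro a b c
    have := hanti₁ a n b c
    rw [this, h1]; ring
  intro x y z w
  have h := htan x y z w
  simp only [map_sub, map_smul, LinearMap.sub_apply, LinearMap.smul_apply,
    smul_eq_mul, sub_eq_add_neg, ← neg_smul, map_add, LinearMap.add_apply, h1, h2, h3, h4] at h
  linarith
end
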